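/- Let D be an inhabited algebraic dcpo and E a pointed bounded complete algebraic dcpo. Then the exponential E^D of Scott continuous functions is algebraic, and the set of suprema of bounded finite sets of single-step functions ⟨a ⇒ b⟩ with a compact in D and b compact in E forms a basis of compact elements for E^D. -/

import Mathlib

open Classical

def IsDcpo (D : Type*) [PartialOrder D] : Prop :=
  ∀ S : Set D, S.Nonempty → DirectedOn (· ≤ ·) S → ∃ s, IsLUB S s

def WayBelow {D : Type*} [PartialOrder D] (x y : D) : Prop :=
  ∀ S : Set D, S.Nonempty → DirectedOn (· ≤ ·) S →
    ∀ s, IsLUB S s → y ≤ s → ∃ a ∈ S, x ≤ a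

def ScottOpen {D : Type*} [PartialOrder D] (U : Set D) : Prop :=
  IsUpperSet U ∧ ∀ S : Set D, S.Nonempty → DirectedOn (· ≤ ·) S →
    ∀ s, IsLUB S s → s ∈ U → ∃ a ∈ S, a ∈ U

def ScottClosed {D : Type*} [PartialOrder D] (C : Set D) : Prop :=
  IsLowerSet C ∧ ∀ S : Set D, S.Nonempty → DirectedOn (· ≤ ·) S →
    S ⊆ C → ∀ s, IsLUB S s → s ∈ C

def IsBasis {D : Type*} [PartialOrder D] (B : Set D) : Prop :=
  ∀ x : D, (B ∩ {y | WayBelow y x}).Nonempty ∧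
    DirectedOn (· ≤ ·) (B ∩ {y | WayBelow y x}) ∧
    IsLUB (B ∩ {y | WayBelow y x}) x

def DcpoContinuous (D : Type*) [PartialOrder D] : Prop :=
  ∀ x : D, ({y | WayBelow y x} : Set D).Nonempty ∧
    DirectedOn (· ≤ ·) ({y | WayBelow y x} : Set D) ∧
    IsLUB ({y | WayBelow y x} : Set D) x

def DcpoAlgebraic (D : Type*) [PartialOrder D] : Prop :=
  ∀ x : D, ({c | WayBelow c c ∧ c ≤ x} : Set D).Nonempty ∧
    DirectedOn (· ≤ ·) ({c | WayBelow c c ∧ c ≤ x} : Set D) ∧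
    IsLUB ({c | WayBelow c c ∧ c ≤ x} : Set D) x

def HausdorffSep {D : Type*} [PartialOrder D] (x y : D) : Prop :=
  ∃ U V : Set D, ScottOpen U ∧ ScottOpen V ∧ x ∈ U ∧ y ∈ V ∧ U ∩ V = ∅

def StronglyMaximal {D : Type*} [PartialOrder D] (x : D) : Prop :=
  ∀ u v : D, WayBelow u v → WayBelow u x ∨ HausdorffSep v x

def Sharp {D : Type*} [PartialOrder D] (x : D) : Prop :=
  ∀ y z : D, WayBelow y z → WayBelow y x ∨ ∃ U : Set D, ScottOpen U ∧ z ∈ U ∧ x ∉ U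

noncomputable def step {D E : Type*} [PartialOrder D] [PartialOrder E] [OrderBot E]
    (x : D) (y : E) : D → E :=
  fun d => if x ≤ d then y else ⊥

/-! A Scott continuous `f : D → E` is determined by the single-step functions below it: for a
compact `b ≤ f d`, continuity of `f` on the directed set of compacts below `d` yields a compact
`a ≤ d` with `b ≤ f a`, i.e. `⟨a ⇒ b⟩ ≤ f`. Since `E` is bounded complete, suprema of bounded
sets of Scott continuous maps exist and are computed pointwise; hence a step between compacts is
compact in `E^D`, and so is a bounded finite join of such steps. These joins below `f` form a
directed set (the join of two of them is still below `f`) whose supremum is `f`. -/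

section WayBelow

variable {α : Type*} [PartialOrder α] {x y z : α}

theorem WayBelow.le (h : WayBelow x y) : x ≤ y := by
  obtain ⟨a, rfl, hxa⟩ := h {y} (Set.singleton_nonempty y) (directedOn_singleton y) y
    isLUB_singleton le_rfl
  exact hxa

theorem WayBelow.trans_le (h : WayBelow x y) (hyz : y ≤ z) : WayBelow x z :=
  fun S hne hdir s hs hzs => h S hne hdir s hs (hyz.trans hzs)

theorem WayBelow.bot [OrderBot α] : WayBelow ⊥ x :=
  fun _ ⟨a, ha⟩ _ _ _ _ => ⟨a, ha, bot_le⟩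

theorem DirectedOn.exists_forall_le_of_finite {S T : Set α} (hdir : DirectedOn (· ≤ ·) S)
    (hne : S.Nonempty) (hT : T.Finite) (h : ∀ t ∈ T, ∃ a ∈ S, t ≤ a) :
    ∃ a ∈ S, ∀ t ∈ T, t ≤ a := by
  induction T, hT using Set.Finite.induction_on with
  | empty => exact ⟨hne.some, hne.some_mem, by simp⟩
  | @insert t T _ _ ih =>
    obtain ⟨a, haS, hTa⟩ := ih fun u hu => h u (Set.mem_insert_of_mem t hu)
    obtain ⟨b, hbS, htb⟩ := h t (Set.mem_insert t T)
    obtain ⟨c, hcS, hac, hbc⟩ := hdir a haS b hbS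
    exact ⟨c, hcS, Set.forall_mem_insert.2 ⟨htb.trans hbc, fun u hu => (hTa u hu).trans hac⟩⟩

theorem wayBelow_self_of_isLUB_of_finite {T : Set α} (hT : T.Finite)
    (hc : ∀ t ∈ T, WayBelow t t) (hx : IsLUB T x) : WayBelow x x := by
  intro S hne hdir s hs hxs
  obtain ⟨a, haS, hTa⟩ := hdir.exists_forall_le_of_finite hne hT
    fun t ht => hc t ht S hne hdir s hs ((hx.1 ht).trans hxs)
  exact ⟨a, haS, hx.2 hTa⟩

theorem DcpoAlgebraic.of_isBasis {B : Set α} (hB : IsBasis B) (hBc : ∀ b ∈ B, WayBelow b b) :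
    DcpoAlgebraic α := by
  intro x
  obtain ⟨hne, hdir, hlub⟩ := hB x
  have below : ∀ c, WayBelow c c → c ≤ x → ∃ b ∈ B ∩ {y | WayBelow y x}, c ≤ b :=
    fun c hc hcx => hc.trans_le hcx _ hne hdir x hlub le_rfl
  refine ⟨hne.mono fun b hb => ⟨hBc b hb.1, hb.2.le⟩, ?_, ?_⟩
  · rintro c₁ ⟨hc₁, hc₁x⟩ c₂ ⟨hc₂, hc₂x⟩
    obtain ⟨b₁, hb₁, hcb₁⟩ := below c₁ hc₁ hc₁x
    obtain ⟨b₂, hb₂, hcb₂⟩ := below c₂ hc₂ hc₂x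
    obtain ⟨b, hb, hb₁b, hb₂b⟩ := hdir b₁ hb₁ b₂ hb₂
    exact ⟨b, ⟨hBc b hb.1, hb.2.le⟩, hcb₁.trans hb₁b, hcb₂.trans hb₂b⟩
  · exact ⟨fun c hc => hc.2, fun v hv => hlub.2 fun b hb => hv ⟨hBc b hb.1, hb.2.le⟩⟩

end WayBelow

def BoundedComplete (E : Type*) [PartialOrder E] : Prop :=
  ∀ S : Set E, BddAbove S → ∃ l, IsLUB S l

abbrev ScottMap (D E : Type*) [PartialOrder D] [PartialOrder E] :=
  {f : D → E // ScottContinuous f}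

namespace ScottMap

variable {D E : Type*} [PartialOrder D] [PartialOrder E]

instance [OrderBot E] : OrderBot (ScottMap D E) where
  bot := ⟨⊥, ScottContinuous.const ⊥⟩
  bot_le _ _ := bot_le

theorem scottContinuous_of_isLUB_apply {S : Set (ScottMap D E)} {m : D → E}
    (hm : ∀ d, IsLUB ((fun f : ScottMap D E => f.1 d) '' S) (m d)) : ScottContinuous m := by
  have le_m : ∀ f ∈ S, ∀ d, f.1 d ≤ m d := fun f hf d => (hm d).1 ⟨f, hf, rfl⟩
  have hmono : Monotone m := fun d d' hdd' =>
    (hm d).2 <| by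
      rintro _ ⟨f, hf, rfl⟩
      exact (f.2.monotone hdd').trans (le_m f hf d')
  intro T hne hdir s hs
  refine ⟨Set.forall_mem_image.2 fun t ht => hmono (hs.1 ht), fun v hv => (hm s).2 ?_⟩
  rintro _ ⟨f, hf, rfl⟩
  refine (f.2 hne hdir hs).2 (Set.forall_mem_image.2 fun t ht => ?_)
  exact (le_m f hf t).trans (hv ⟨t, ht, rfl⟩)

theorem isLUB_of_isLUB_apply {S : Set (ScottMap D E)} {m : D → E}
    (hm : ∀ d, IsLUB ((fun f : ScottMap D E => f.1 d) '' S) (m d)) :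
    IsLUB S ⟨m, scottContinuous_of_isLUB_apply hm⟩ :=
  ⟨fun f hf d => (hm d).1 ⟨f, hf, rfl⟩,
    fun _ hv d => (hm d).2 (Set.forall_mem_image.2 fun _ hf => hv hf d)⟩

theorem exists_isLUB_apply (hE : BoundedComplete E) {S : Set (ScottMap D E)} (hS : BddAbove S) :
    ∃ g : ScottMap D E, IsLUB S g ∧ ∀ d, IsLUB ((fun f : ScottMap D E => f.1 d) '' S) (g.1 d) := by
  obtain ⟨u, hu⟩ := hS
  choose m hm using fun d => hE ((fun f : ScottMap D E => f.1 d) '' S)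
    ⟨u.1 d, Set.forall_mem_image.2 fun f hf => hu hf d⟩
  exact ⟨_, isLUB_of_isLUB_apply hm, hm⟩

theorem _root_.BoundedComplete.scottMap (hE : BoundedComplete E) :
    BoundedComplete (ScottMap D E) := fun _ hS =>
  (exists_isLUB_apply hE hS).imp fun _ => And.left

theorem isLUB_apply (hE : BoundedComplete E) {S : Set (ScottMap D E)} {g : ScottMap D E}
    (hg : IsLUB S g) (d : D) : IsLUB ((fun f : ScottMap D E => f.1 d) '' S) (g.1 d) := by
  obtain ⟨g', hg', hg'd⟩ := exists_isLUB_apply hE ⟨g, hg.1⟩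
  exact hg'.unique hg ▸ hg'd d

end ScottMap

section Step

variable {D E : Type*} [PartialOrder D] [PartialOrder E] [OrderBot E] {a : D} {b : E}

theorem step_le_iff {f : D → E} (hf : Monotone f) : step a b ≤ f ↔ b ≤ f a := by
  refine ⟨fun h => by simpa [step] using h a, fun h d => ?_⟩
  by_cases had : a ≤ d
  · simpa [step, had] using h.trans (hf had)
  · simp [step, had]

theorem scottContinuous_step (ha : WayBelow a a) (b : E) : ScottContinuous (step a b) := by
  intro T hne hdir s hs
  by_cases has : a ≤ s
  · obtain ⟨t, htT, hat⟩ := ha T hne hdir s hs has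
    have hb : b ∈ step a b '' T := ⟨t, htT, if_pos hat⟩
    rw [show step a b s = b from if_pos has]
    exact ⟨Set.forall_mem_image.2 fun t _ => by unfold step; split_ifs <;> simp, fun _ hv => hv hb⟩
  · have hT : ∀ t ∈ T, step a b t = ⊥ := fun t ht => if_neg fun hat => has (hat.trans (hs.1 ht))
    rw [show step a b s = ⊥ from if_neg has]
    exact ⟨Set.forall_mem_image.2 fun t ht => (hT t ht).le, fun _ _ => bot_le⟩

theorem wayBelow_self_step (hE : BoundedComplete E) (ha : WayBelow a a) (hb : WayBelow b b) :
    WayBelow (⟨step a b, scottContinuous_step ha b⟩ : ScottMap D E)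
      ⟨step a b, scottContinuous_step ha b⟩ := by
  intro S hne hdir s hs hstep
  have hbs : b ≤ s.1 a := (step_le_iff s.2.monotone).1 hstep
  obtain ⟨_, ⟨f, hfS, rfl⟩, hbf⟩ := hb _ (hne.image _)
    (hdir.mono_comp fun _ _ h => h a) _ (ScottMap.isLUB_apply hE hs a) hbs
  exact ⟨f, hfS, (step_le_iff f.2.monotone).2 hbf⟩

end Step

theorem ScottContinuous.exists_compact_le_of_le_apply {D E : Type*} [PartialOrder D]
    [PartialOrder E] (hDalg : DcpoAlgebraic D) {f : D → E} (hf : ScottContinuous f) {d : D}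
    {b : E} (hb : WayBelow b b) (hbd : b ≤ f d) : ∃ a, WayBelow a a ∧ a ≤ d ∧ b ≤ f a := by
  obtain ⟨hne, hdir, hlub⟩ := hDalg d
  obtain ⟨_, ⟨a, ⟨ha, had⟩, rfl⟩, hba⟩ :=
    hb _ (hne.image f) (hdir.mono_comp hf.monotone) _ (hf hne hdir hlub) hbd
  exact ⟨a, ha, had, hba⟩

section StepBasis

variable {D E : Type*} [PartialOrder D] [PartialOrder E] [OrderBot E]

def stepSet (F : Finset (D × E)) : Set (ScottMap D E) :=
  {h | ∃ p ∈ F, (h : D → E) = step p.1 p.2}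

variable (D E) in
def stepBasis : Set (ScottMap D E) :=
  {g | ∃ F : Finset (D × E), (∀ p ∈ F, WayBelow p.1 p.1 ∧ WayBelow p.2 p.2) ∧
    (∃ u : ScottMap D E, ∀ p ∈ F, ∀ d : D, step p.1 p.2 d ≤ u.1 d) ∧ IsLUB (stepSet F) g}

theorem stepSet_finite (F : Finset (D × E)) : (stepSet F).Finite :=
  ((F.finite_toSet.image fun p => step p.1 p.2).preimage Subtype.val_injective.injOn).subset
    fun _ ⟨p, hp, h⟩ => ⟨p, hp, h.symm⟩

theorem stepSet_union (F G : Finset (D × E)) : stepSet (F ∪ G) = stepSet F ∪ stepSet G := by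
  ext
  simp [stepSet, or_and_right, exists_or]

theorem stepSet_singleton {a : D} (ha : WayBelow a a) (b : E) :
    stepSet {(a, b)} = {⟨step a b, scottContinuous_step ha b⟩} := by
  ext
  simp [stepSet, Subtype.ext_iff]

theorem wayBelow_self_of_mem_stepBasis (hE : BoundedComplete E) {g : ScottMap D E}
    (hg : g ∈ stepBasis D E) : WayBelow g g := by
  obtain ⟨F, hF, -, hlub⟩ := hg
  refine wayBelow_self_of_isLUB_of_finite (stepSet_finite F) ?_ hlub
  rintro h ⟨p, hp, hh⟩
  obtain rfl : h = ⟨step p.1 p.2, scottContinuous_step (hF p hp).1 _⟩ := Subtype.ext hh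
  exact wayBelow_self_step hE (hF p hp).1 (hF p hp).2

theorem bot_mem_stepBasis : (⊥ : ScottMap D E) ∈ stepBasis D E :=
  ⟨∅, by simp, ⟨⊥, by simp⟩, by simp [stepSet]⟩

theorem step_mem_stepBasis {a : D} {b : E} (ha : WayBelow a a) (hb : WayBelow b b) :
    ⟨step a b, scottContinuous_step ha b⟩ ∈ stepBasis D E :=
  ⟨{(a, b)}, by simpa using ⟨ha, hb⟩, ⟨⟨step a b, scottContinuous_step ha b⟩, by simp⟩,
    stepSet_singleton ha b ▸ isLUB_singleton⟩

theorem exists_mem_stepBasis_le (hE : BoundedComplete E) {g₁ g₂ x : ScottMap D E}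
    (hg₁ : g₁ ∈ stepBasis D E) (hg₂ : g₂ ∈ stepBasis D E) (h₁ : g₁ ≤ x) (h₂ : g₂ ≤ x) :
    ∃ g ∈ stepBasis D E, g₁ ≤ g ∧ g₂ ≤ g ∧ g ≤ x := by
  obtain ⟨F₁, hF₁, -, hl₁⟩ := hg₁
  obtain ⟨F₂, hF₂, -, hl₂⟩ := hg₂
  have hF : ∀ p ∈ F₁ ∪ F₂, WayBelow p.1 p.1 ∧ WayBelow p.2 p.2 :=
    fun p hp => (Finset.mem_union.1 hp).elim (hF₁ p) (hF₂ p)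
  have hx : x ∈ upperBounds (stepSet (F₁ ∪ F₂)) := by
    rw [stepSet_union, upperBounds_union]
    exact ⟨fun _ h => (hl₁.1 h).trans h₁, fun _ h => (hl₂.1 h).trans h₂⟩
  obtain ⟨g, hg⟩ := hE.scottMap _ ⟨x, hx⟩
  have hg₁₂ := hg.1
  rw [stepSet_union, upperBounds_union] at hg₁₂
  refine ⟨g, ⟨F₁ ∪ F₂, hF, ⟨x, fun p hp => ?_⟩, hg⟩, hl₁.2 hg₁₂.1, hl₂.2 hg₁₂.2, hg.2 hx⟩
  exact hx (a := ⟨step p.1 p.2, scottContinuous_step (hF p hp).1 _⟩) ⟨p, hp, rfl⟩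

theorem isLUB_stepBasis_inter_wayBelow (hE : BoundedComplete E) (hDalg : DcpoAlgebraic D)
    (hEalg : DcpoAlgebraic E) (x : ScottMap D E) :
    IsLUB (stepBasis D E ∩ {g | WayBelow g x}) x := by
  refine ⟨fun g hg => hg.2.le, fun v hv d => ?_⟩
  refine (hEalg (x.1 d)).2.2.2 fun b ⟨hb, hbx⟩ => ?_
  obtain ⟨a, ha, had, hba⟩ := x.2.exists_compact_le_of_le_apply hDalg hb hbx
  have hstep : (⟨step a b, scottContinuous_step ha b⟩ : ScottMap D E) ≤ v :=
    hv ⟨step_mem_stepBasis ha hb,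
      (wayBelow_self_step hE ha hb).trans_le ((step_le_iff x.2.monotone).2 hba)⟩
  exact ((step_le_iff v.2.monotone).1 hstep).trans (v.2.monotone had)

theorem isBasis_stepBasis (hE : BoundedComplete E) (hDalg : DcpoAlgebraic D)
    (hEalg : DcpoAlgebraic E) : IsBasis (stepBasis D E) := by
  intro x
  refine ⟨⟨⊥, bot_mem_stepBasis, WayBelow.bot⟩, ?_,
    isLUB_stepBasis_inter_wayBelow hE hDalg hEalg x⟩
  rintro g₁ ⟨hg₁, hg₁x⟩ g₂ ⟨hg₂, hg₂x⟩
  obtain ⟨g, hg, h₁, h₂, hgx⟩ := exists_mem_stepBasis_le hE hg₁ hg₂ hg₁x.le hg₂x.le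
  exact ⟨g, ⟨hg, (wayBelow_self_of_mem_stepBasis hE hg).trans_le hgx⟩, h₁, h₂⟩

end StepBasis

theorem stmt14_general {D E : Type*} [PartialOrder D] [PartialOrder E] [OrderBot E]
    (hDalg : DcpoAlgebraic D)
    (hEbc : ∀ S : Set E, (∃ u : E, ∀ s ∈ S, s ≤ u) → ∃ l : E, IsLUB S l)
    (hEalg : DcpoAlgebraic E) :
    DcpoAlgebraic {f : D → E // ScottContinuous f} ∧
    (∀ g ∈ ({g : {f : D → E // ScottContinuous f} | ∃ F : Finset (D × E),
        (∀ p ∈ F, WayBelow p.1 p.1 ∧ WayBelow p.2 p.2) ∧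
        (∃ u : {f : D → E // ScottContinuous f}, ∀ p ∈ F, ∀ d : D, step p.1 p.2 d ≤ u.1 d) ∧
        IsLUB {h : {f : D → E // ScottContinuous f} |
          ∃ p ∈ F, (h : D → E) = step p.1 p.2} g}), WayBelow g g) ∧
    IsBasis ({g : {f : D → E // ScottContinuous f} | ∃ F : Finset (D × E),
        (∀ p ∈ F, WayBelow p.1 p.1 ∧ WayBelow p.2 p.2) ∧
        (∃ u : {f : D → E // ScottContinuous f}, ∀ p ∈ F, ∀ d : D, step p.1 p.2 d ≤ u.1 d) ∧
        IsLUB {h : {f : D → E // ScottContinuous f} |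
          ∃ p ∈ F, (h : D → E) = step p.1 p.2} g}) := by
  have hB : IsBasis (stepBasis D E) := isBasis_stepBasis hEbc hDalg hEalg
  have hBc : ∀ g ∈ stepBasis D E, WayBelow g g := fun _ => wayBelow_self_of_mem_stepBasis hEbc
  exact ⟨DcpoAlgebraic.of_isBasis hB hBc, hBc, hB⟩

theorem stmt14 {D E : Type*} [PartialOrder D] [PartialOrder E] [OrderBot E]
    (hD : IsDcpo D) (hDne : Nonempty D) (hDalg : DcpoAlgebraic D)
    (hE : IsDcpo E)
    (hEbc : ∀ S : Set E, (∃ u : E, ∀ s ∈ S, s ≤ u) → ∃ l : E, IsLUB S l)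
    (hEalg : DcpoAlgebraic E) :
    DcpoAlgebraic {f : D → E // ScottContinuous f} ∧
    (∀ g ∈ ({g : {f : D → E // ScottContinuous f} | ∃ F : Finset (D × E),
        (∀ p ∈ F, WayBelow p.1 p.1 ∧ WayBelow p.2 p.2) ∧
        (∃ u : {f : D → E // ScottContinuous f}, ∀ p ∈ F, ∀ d : D, step p.1 p.2 d ≤ u.1 d) ∧
        IsLUB {h : {f : D → E // ScottContinuous f} |
          ∃ p ∈ F, (h : D → E) = step p.1 p.2} g}), WayBelow g g) ∧
    IsBasis ({g : {f : D → E // ScottContinuous f} | ∃ F : Finset (D × E),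
        (∀ p ∈ F, WayBelow p.1 p.1 ∧ WayBelow p.2 p.2) ∧
        (∃ u : {f : D → E // ScottContinuous f}, ∀ p ∈ F, ∀ d : D, step p.1 p.2 d ≤ u.1 d) ∧
        IsLUB {h : {f : D → E // ScottContinuous f} |
          ∃ p ∈ F, (h : D → E) = step p.1 p.2} g}) :=
  stmt14_general hDalg hEbc hEalg
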